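/- arXiv:2409.17787 — 3 statements merged into one kernel-verified Lean document; each statement's English description precedes it below -/
import Mathlib

section
/- Let α > 0 and let h : ℝ² → ℝ satisfy h(x) = -α log|x| + O(|x|⁻¹) as |x| → ∞. For a polynomial v of degree m in the variable x₁ - i x₂, the function u(x) = e^{h(x)} v(x₁ - i x₂) satisfies |u(x)| ≍ |x|^{m - α} as |x| → ∞. Consequently u ∈ L²(ℝ²) if and only if m < α - 1, and u is bounded if and only if m ≤ α. -/
/-!
Outside a large disc `|h x + α log ‖x‖|` is bounded, so `e^{h(x)} ≍ ‖x‖^{-α}`, and a monic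
polynomial of degree `m` satisfies `|v(x̄)| ≍ ‖x‖^m`; hence `|u(x)| ≍ ‖x‖^{m-α}` at infinity.
As `u` is continuous, square integrability and boundedness are decided at infinity, where in
polar coordinates `∫_{‖x‖>R} ‖x‖^{2t} dx < ∞ ↔ 2t + 1 < -1`, and `‖x‖^t` is bounded iff `t ≤ 0`.
-/

open MeasureTheory Filter Asymptotics Bornology Metric Set Polynomial

section NormRpow

variable {E : Type*} [NormedAddCommGroup E]

theorem eventually_cobounded_iff_forall_norm_ge {P : E → Prop} :
    (∀ᶠ x in cobounded E, P x) ↔ ∃ R, 0 < R ∧ ∀ x, R ≤ ‖x‖ → P x := by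
  rw [← comap_norm_atTop, eventually_comap, eventually_atTop]
  constructor
  · rintro ⟨a, ha⟩
    exact ⟨max a 1, by positivity, fun x hx => ha _ (le_of_max_le_left hx) x rfl⟩
  · rintro ⟨R, -, hR⟩
    exact ⟨R, fun b hb x hx => hR x (hx ▸ hb)⟩

theorem exists_bounds_of_isTheta_rpow_norm {F : Type*} [SeminormedAddCommGroup F] {f : E → F}
    {s : ℝ} (hf : f =Θ[cobounded E] fun x => ‖x‖ ^ s) :
    ∃ c₁ c₂ R : ℝ, 0 < c₁ ∧ 0 < R ∧ ∀ x, R ≤ ‖x‖ →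
      c₁ * ‖x‖ ^ s ≤ ‖f x‖ ∧ ‖f x‖ ≤ c₂ * ‖x‖ ^ s := by
  obtain ⟨c₂, hc₂⟩ := hf.isBigO.bound
  obtain ⟨c, hc, hc'⟩ := hf.isBigO_symm.exists_pos
  obtain ⟨R, hR, hbounds⟩ := eventually_cobounded_iff_forall_norm_ge.1 (hc₂.and hc'.bound)
  refine ⟨c⁻¹, c₂, R, inv_pos.2 hc, hR, fun x hx => ?_⟩
  obtain ⟨hupper, hlower⟩ := hbounds x hx
  rw [Real.norm_of_nonneg (by positivity)] at hupper hlower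
  exact ⟨by rwa [inv_mul_le_iff₀ hc], hupper⟩

variable [NormedSpace ℝ E] [Nontrivial E]

theorem rpow_norm_isBigO_one_iff {s : ℝ} :
    (fun x : E => ‖x‖ ^ s) =O[cobounded E] (1 : E → ℝ) ↔ s ≤ 0 := by
  constructor
  · intro h
    by_contra! hs
    refine not_isBoundedUnder_of_tendsto_atTop ?_ ((isBigO_one_iff ℝ).1 h)
    exact tendsto_norm_atTop_atTop.comp ((tendsto_rpow_atTop hs).comp tendsto_norm_cobounded_atTop)
  · intro hs
    refine IsBigO.of_bound 1 ?_
    filter_upwards [tendsto_norm_cobounded_atTop.eventually_ge_atTop 1] with x hx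
    rw [Pi.one_apply, norm_one, one_mul, Real.norm_of_nonneg (by positivity)]
    exact Real.rpow_le_one_of_one_le_of_nonpos hx hs

variable [FiniteDimensional ℝ E]

theorem Continuous.isBounded_range_iff_of_isTheta_rpow_norm
    {F : Type*} [SeminormedAddCommGroup F] {f : E → F} {s : ℝ} (hf : Continuous f)
    (hθ : f =Θ[cobounded E] fun x => ‖x‖ ^ s) : IsBounded (range f) ↔ s ≤ 0 := by
  rw [hf.isBounded_range_iff_isBigO, ← cobounded_eq_cocompact, hθ.isBigO_congr_left,
    rpow_norm_isBigO_one_iff]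

variable [MeasurableSpace E] [BorelSpace E] (μ : Measure E)
  [μ.IsAddHaarMeasure]

theorem integrableOn_rpow_norm_compl_closedBall_iff {r s : ℝ} (hr : 0 < r) :
    IntegrableOn (fun x : E => ‖x‖ ^ s) (closedBall 0 r)ᶜ μ ↔ s < -Module.finrank ℝ E := by
  have hdim : ((Module.finrank ℝ E - 1 : ℕ) : ℝ) = Module.finrank ℝ E - 1 :=
    Nat.cast_pred Module.finrank_pos
  calc _ ↔ Integrable (fun x : E => (Ioi r).indicator (· ^ s) ‖x‖) μ := by
        rw [← integrable_indicator_iff measurableSet_closedBall.compl]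
        refine integrable_congr (.of_forall fun x => ?_)
        by_cases hx : r < ‖x‖ <;> simp [indicator, hx]
    _ ↔ IntegrableOn (fun y : ℝ => y ^ (Module.finrank ℝ E - 1) • (Ioi r).indicator (· ^ s) y)
          (Ioi 0) := integrable_fun_norm_addHaar μ
    _ ↔ IntegrableOn (fun y : ℝ => y ^ ((Module.finrank ℝ E : ℝ) - 1 + s)) (Ioi r) := by
        rw [← inter_eq_left.2 (Ioi_subset_Ioi hr.le),
          ← integrableOn_indicator_iff measurableSet_Ioi]
        refine integrableOn_congr_fun (fun y (hy : 0 < y) => ?_) measurableSet_Ioi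
        by_cases hyr : r < y
        · simp [indicator, hyr, hy.not_ge, ← Real.rpow_natCast, hdim, Real.rpow_add hy]
        · simp [indicator, hyr]
    _ ↔ _ := by
        rw [integrableOn_Ioi_rpow_iff hr]
        constructor <;> intro <;> linarith

theorem integrableAtFilter_rpow_norm_iff {s : ℝ} :
    IntegrableAtFilter (fun x : E => ‖x‖ ^ s) (cobounded E) μ ↔ s < -Module.finrank ℝ E := by
  constructor
  · rintro ⟨S, hS, hint⟩
    obtain ⟨R, hR, hRS⟩ := eventually_cobounded_iff_forall_norm_ge.1 hS
    refine (integrableOn_rpow_norm_compl_closedBall_iff μ hR).1 (hint.mono_set fun x hx => ?_)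
    exact hRS x (le_of_lt (by simpa using hx))
  · intro hs
    exact ⟨_, isBounded_closedBall,
      (integrableOn_rpow_norm_compl_closedBall_iff μ one_pos).2 hs⟩

theorem LocallyIntegrable.integrable_iff_of_isTheta_rpow_norm {F : Type*} [NormedAddCommGroup F]
    {f : E → F} {s : ℝ} (hf : LocallyIntegrable f μ) (hθ : f =Θ[cobounded E] fun x => ‖x‖ ^ s) :
    Integrable f μ ↔ s < -Module.finrank ℝ E := by
  rw [← integrableAtFilter_rpow_norm_iff μ, cobounded_eq_cocompact]
  rw [cobounded_eq_cocompact] at hθ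
  refine ⟨fun h => ?_, hf.integrable_of_isBigO_cocompact hθ.isBigO⟩
  exact hθ.isBigO_symm.integrableAtFilter
    (measurable_norm.pow_const s).aestronglyMeasurable.stronglyMeasurableAtFilter
    (h.integrableAtFilter _)

theorem Continuous.memLp_two_iff_of_isTheta_rpow_norm {F : Type*} [NormedAddCommGroup F]
    {f : E → F} {s : ℝ} (hf : Continuous f) (hθ : f =Θ[cobounded E] fun x => ‖x‖ ^ s) :
    MemLp f 2 μ ↔ 2 * s < -Module.finrank ℝ E := by
  rw [memLp_two_iff_integrable_sq_norm hf.aestronglyMeasurable]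
  refine LocallyIntegrable.integrable_iff_of_isTheta_rpow_norm μ
    (hf.norm.pow 2).locallyIntegrable ?_
  refine (hθ.norm_left.pow 2).trans_eventuallyEq (.of_forall fun x => ?_)
  simp only [mul_comm (2 : ℝ), ← Real.rpow_mul_natCast (norm_nonneg x), Nat.cast_ofNat]

end NormRpow

theorem isTheta_exp_rpow_norm {E : Type*} [NormedAddCommGroup E] {h : E → ℝ} {α : ℝ}
    (hh : IsBoundedUnder (· ≤ ·) (cobounded E) fun x => |h x + α * Real.log ‖x‖|) :
    (fun x => Real.exp (h x)) =Θ[cobounded E] fun x => ‖x‖ ^ (-α) := by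
  have hrpow : (fun x => Real.exp (-α * Real.log ‖x‖)) =ᶠ[cobounded E] fun x => ‖x‖ ^ (-α) := by
    filter_upwards [tendsto_norm_cobounded_atTop.eventually_gt_atTop 0] with x hx
    rw [Real.rpow_def_of_pos hx, mul_comm]
  refine (Real.isTheta_exp_comp_exp_comp.2 ?_).trans_eventuallyEq hrpow
  simpa only [neg_mul, sub_neg_eq_add] using hh

open ComplexConjugate in
theorem Polynomial.Monic.isTheta_eval_conj {v : ℂ[X]} (hv : v.Monic) :
    (fun z => v.eval (conj z)) =Θ[cobounded ℂ] fun z => ‖z‖ ^ (v.natDegree : ℝ) := by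
  have hconj : Tendsto conj (cobounded ℂ) (cobounded ℂ) := by
    rw [← tendsto_norm_atTop_iff_cobounded]
    simpa using tendsto_norm_cobounded_atTop
  have hlead : (fun z => v.eval z) =Θ[cobounded ℂ] fun z => z ^ v.natDegree := by
    simpa only [hv.leadingCoeff, one_mul] using
      (isEquivalent_cobounded_leading_monomial (P := v)).isTheta
  refine IsTheta.trans ⟨hlead.1.comp_tendsto hconj, hlead.2.comp_tendsto hconj⟩
    (.of_norm_eventuallyEq (.of_forall fun z => ?_))
  simp [Real.rpow_natCast]

open ComplexConjugate in
theorem isTheta_exp_mul_eval_conj {h : ℂ → ℝ} {α : ℝ}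
    (hh : IsBoundedUnder (· ≤ ·) (cobounded ℂ) fun x => |h x + α * Real.log ‖x‖|)
    {v : ℂ[X]} (hv : v.Monic) :
    (fun z => Complex.exp (h z) * v.eval (conj z)) =Θ[cobounded ℂ]
      fun z => ‖z‖ ^ ((v.natDegree : ℝ) - α) := by
  have hexp : (fun z => Complex.exp (h z)) =Θ[cobounded ℂ] fun z => ‖z‖ ^ (-α) :=
    .of_norm_left (by simpa only [Complex.norm_exp_ofReal] using isTheta_exp_rpow_norm hh)
  refine (hexp.mul hv.isTheta_eval_conj).trans_eventuallyEq ?_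
  filter_upwards [tendsto_norm_cobounded_atTop.eventually_gt_atTop 0] with z hz
  rw [← Real.rpow_add hz, neg_add_eq_sub]

theorem aharonov_casher_mode_growth_general
    (α : ℝ) (h : ℂ → ℝ) (hcont : Continuous h)
    (hasymp : ∃ C R : ℝ, 0 < R ∧ ∀ x : ℂ, R ≤ ‖x‖ →
      |h x + α * Real.log ‖x‖| ≤ C / ‖x‖)
    (v : Polynomial ℂ) (hmonic : v.Monic) (m : ℕ) (hdeg : v.natDegree = m)
    (u : ℂ → ℂ)
    (hu : ∀ x : ℂ, u x = Complex.exp (h x) * Polynomial.eval ((starRingEnd ℂ) x) v) :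
    (∃ c₁ c₂ R' : ℝ, 0 < c₁ ∧ 0 < R' ∧ ∀ x : ℂ, R' ≤ ‖x‖ →
        c₁ * ‖x‖ ^ ((m : ℝ) - α) ≤ ‖u x‖ ∧ ‖u x‖ ≤ c₂ * ‖x‖ ^ ((m : ℝ) - α)) ∧
    (MemLp u 2 volume ↔ (m : ℝ) < α - 1) ∧
    ((∃ M : ℝ, ∀ x : ℂ, ‖u x‖ ≤ M) ↔ (m : ℝ) ≤ α) := by
  obtain ⟨C, R, hR, hC⟩ := hasymp
  have hbdd : IsBoundedUnder (· ≤ ·) (cobounded ℂ) fun x => |h x + α * Real.log ‖x‖| :=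
    isBoundedUnder_of_eventually_le <| eventually_cobounded_iff_forall_norm_ge.2
      ⟨R, hR, fun x hx => (hC x hx).trans (div_le_div₀ (abs_nonneg C) (le_abs_self C) hR hx)⟩
  have hθ : u =Θ[cobounded ℂ] fun x => ‖x‖ ^ ((m : ℝ) - α) := by
    rw [funext hu, ← hdeg]
    exact isTheta_exp_mul_eval_conj hbdd hmonic
  have hu_cont : Continuous u := by
    rw [funext hu]
    fun_prop
  refine ⟨exists_bounds_of_isTheta_rpow_norm hθ, ?_, ?_⟩
  · rw [hu_cont.memLp_two_iff_of_isTheta_rpow_norm volume hθ, Complex.finrank_real_complex]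
    constructor <;> intro <;> push_cast at * <;> linarith
  · rw [← sub_nonpos, ← hu_cont.isBounded_range_iff_of_isTheta_rpow_norm hθ,
      isBounded_iff_forall_norm_le]
    simp only [forall_mem_range]

/-- Growth of (generalized) Aharonov–Casher zero modes: if
`h(x) = -α log|x| + O(|x|⁻¹)` and `v` is a monic polynomial of degree `m`, then
`u(x) = e^{h(x)} v(x₁ - ix₂)` satisfies `|u(x)| ≍ |x|^{m-α}` at infinity;
consequently `u ∈ L²(ℝ²)` iff `m < α - 1`, and `u` is bounded iff `m ≤ α`. -/
theorem aharonov_casher_mode_growth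
    (α : ℝ) (hα : 0 < α) (h : ℂ → ℝ) (hcont : Continuous h)
    (hasymp : ∃ C R : ℝ, 0 < R ∧ ∀ x : ℂ, R ≤ ‖x‖ →
      |h x + α * Real.log ‖x‖| ≤ C / ‖x‖)
    (v : Polynomial ℂ) (hmonic : v.Monic) (m : ℕ) (hdeg : v.natDegree = m)
    (u : ℂ → ℂ)
    (hu : ∀ x : ℂ, u x = Complex.exp (h x) * Polynomial.eval ((starRingEnd ℂ) x) v) :
    (∃ c₁ c₂ R' : ℝ, 0 < c₁ ∧ 0 < R' ∧ ∀ x : ℂ, R' ≤ ‖x‖ →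
        c₁ * ‖x‖ ^ ((m : ℝ) - α) ≤ ‖u x‖ ∧ ‖u x‖ ≤ c₂ * ‖x‖ ^ ((m : ℝ) - α)) ∧
    (MemLp u 2 volume ↔ (m : ℝ) < α - 1) ∧
    ((∃ M : ℝ, ∀ x : ℂ, ‖u x‖ ≤ M) ↔ (m : ℝ) ≤ α) :=
  aharonov_casher_mode_growth_general α h hcont hasymp v hmonic m hdeg u hu
end

section
/- Let H be a Hilbert space and let ψ₀,…,ψ_{n-1} be pairwise orthogonal nonzero vectors. Let P = Σₖ ‖ψₖ‖⁻² ψₖ ⟨ψₖ, ·⟩ be the orthogonal projection onto their span, and let v be a bounded non-negative self-adjoint operator such that the vectors {v^{1/2} ψₖ} are also pairwise orthogonal and nonzero. Then the nonzero eigenvalues of v^{1/2} P v^{1/2} are exactly μₖ = ‖v^{1/2} ψₖ‖² / ‖ψₖ‖², k = 0,…,n-1. -/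
open scoped InnerProductSpace

/-!
Since `w` is symmetric, `⟪ψₖ, w x⟫ = ⟪w ψₖ, x⟫`, so `w P w = Σₖ ‖ψₖ‖⁻² (w ψₖ)⟨w ψₖ, ·⟩` is a sum of
rank-one operators along the pairwise orthogonal vectors `uₖ = w ψₖ`. Each `uₖ` is an eigenvector
with eigenvalue `‖ψₖ‖⁻² ‖uₖ‖²`; conversely, pairing an eigenvector `x` for `μ ≠ 0` with a `uⱼ` such
that `⟪uⱼ, x⟫ ≠ 0` (one exists, as `x` lies in the span of the `uₖ`) forces `μ = ‖ψⱼ‖⁻² ‖uⱼ‖²`.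
-/

section PairwiseOrthogonal

variable {𝕜 E ι : Type*} [RCLike 𝕜] [NormedAddCommGroup E] [InnerProductSpace 𝕜 E] [Fintype ι]
  {u : ι → E}

theorem inner_sum_smul_of_pairwise_orthogonal (hu : Pairwise fun j k => ⟪u j, u k⟫_𝕜 = 0)
    (a : ι → 𝕜) (j : ι) :
    ⟪u j, ∑ k, a k • u k⟫_𝕜 = a j * ((‖u j‖ ^ 2 : ℝ) : 𝕜) := by
  rw [inner_sum, Finset.sum_eq_single_of_mem j (Finset.mem_univ j)]
  · rw [inner_smul_right, inner_self_eq_norm_sq_to_K, RCLike.ofReal_pow]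
  · intro k _ hkj
    rw [inner_smul_right, hu hkj.symm, mul_zero]

theorem sum_inner_smul_apply_of_pairwise_orthogonal (hu : Pairwise fun j k => ⟪u j, u k⟫_𝕜 = 0)
    (c : ι → 𝕜) (j : ι) :
    ∑ k, (c k * ⟪u k, u j⟫_𝕜) • u k = (c j * ((‖u j‖ ^ 2 : ℝ) : 𝕜)) • u j := by
  rw [Finset.sum_eq_single_of_mem j (Finset.mem_univ j)]
  · rw [inner_self_eq_norm_sq_to_K, RCLike.ofReal_pow]
  · intro k _ hkj
    rw [hu hkj, mul_zero, zero_smul]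

theorem exists_eq_mul_norm_sq_of_sum_inner_smul_eq_smul
    (hu : Pairwise fun j k => ⟪u j, u k⟫_𝕜 = 0) {c : ι → 𝕜} {μ : 𝕜} (hμ : μ ≠ 0) {x : E}
    (hx : x ≠ 0) (hxμ : ∑ k, (c k * ⟪u k, x⟫_𝕜) • u k = μ • x) :
    ∃ j, μ = c j * ((‖u j‖ ^ 2 : ℝ) : 𝕜) := by
  obtain ⟨j, hj⟩ : ∃ j, ⟪u j, x⟫_𝕜 ≠ 0 := by
    by_contra! h
    simp only [h, mul_zero, zero_smul, Finset.sum_const_zero] at hxμ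
    exact (smul_ne_zero hμ hx) hxμ.symm
  refine ⟨j, mul_right_cancel₀ hj ?_⟩
  have hpair := congrArg (fun y => ⟪u j, y⟫_𝕜) hxμ
  simp only [inner_sum_smul_of_pairwise_orthogonal hu, inner_smul_right] at hpair
  linear_combination -hpair

theorem exists_ne_zero_sum_inner_smul_eq_smul_iff
    (hu : Pairwise fun j k => ⟪u j, u k⟫_𝕜 = 0) (hu₀ : ∀ k, u k ≠ 0) (c : ι → 𝕜) {μ : 𝕜}
    (hμ : μ ≠ 0) :
    (∃ x : E, x ≠ 0 ∧ ∑ k, (c k * ⟪u k, x⟫_𝕜) • u k = μ • x) ↔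
      ∃ k, μ = c k * ((‖u k‖ ^ 2 : ℝ) : 𝕜) := by
  constructor
  · rintro ⟨x, hx, hxμ⟩
    exact exists_eq_mul_norm_sq_of_sum_inner_smul_eq_smul hu hμ hx hxμ
  · rintro ⟨k, rfl⟩
    exact ⟨u k, hu₀ k, sum_inner_smul_apply_of_pairwise_orthogonal hu c k⟩

end PairwiseOrthogonal

theorem radial_eigenvalues_of_vPv_general
    {H : Type*} [NormedAddCommGroup H] [InnerProductSpace ℂ H] [CompleteSpace H]
    {n : ℕ} (ψ : Fin n → H)
    (P : H →L[ℂ] H)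
    (hP : ∀ x : H, P x = ∑ k, ((‖ψ k‖ ^ 2 : ℝ) : ℂ)⁻¹ • (⟪ψ k, x⟫_ℂ • ψ k))
    (w : H →L[ℂ] H)
    (hw : IsSelfAdjoint w)
    (hwne : ∀ k, w (ψ k) ≠ 0)
    (hworth : ∀ j k, j ≠ k → ⟪w (ψ j), w (ψ k)⟫_ℂ = 0) :
    ∀ μ : ℂ, μ ≠ 0 →
      ((∃ x : H, x ≠ 0 ∧ w (P (w x)) = μ • x) ↔
        ∃ k, μ = ((‖w (ψ k)‖ ^ 2 / ‖ψ k‖ ^ 2 : ℝ) : ℂ)) := by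
  intro μ hμ
  have hw_symm : ∀ a b : H, ⟪w a, b⟫_ℂ = ⟪a, w b⟫_ℂ := hw.isSymmetric
  have hwPw : ∀ x, w (P (w x)) =
      ∑ k, (((‖ψ k‖ ^ 2 : ℝ) : ℂ)⁻¹ * ⟪w (ψ k), x⟫_ℂ) • w (ψ k) := fun x => by
    simp only [hP, map_sum, map_smul, smul_smul, ← hw_symm]
  simp only [hwPw, exists_ne_zero_sum_inner_smul_eq_smul_iff hworth hwne _ hμ,
    RCLike.ofReal_eq_complex_ofReal, div_eq_inv_mul, Complex.ofReal_mul, Complex.ofReal_inv]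

/-- Nonzero eigenvalues of `v^{1/2} P v^{1/2}` for pairwise orthogonal states
(radial case): with `P = Σₖ ‖ψₖ‖⁻² ψₖ⟨ψₖ,·⟩` the orthogonal projection onto
`span{ψₖ}` and `w = v^{1/2}` such that the `w ψₖ` are pairwise orthogonal and
nonzero, the nonzero eigenvalues of `w P w` are exactly
`μₖ = ‖w ψₖ‖²/‖ψₖ‖²`. -/
theorem radial_eigenvalues_of_vPv
    {H : Type*} [NormedAddCommGroup H] [InnerProductSpace ℂ H] [CompleteSpace H]
    {n : ℕ} (ψ : Fin n → H) (hne : ∀ k, ψ k ≠ 0)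
    (horth : ∀ j k, j ≠ k → ⟪ψ j, ψ k⟫_ℂ = 0)
    (P : H →L[ℂ] H)
    (hP : ∀ x : H, P x = ∑ k, ((‖ψ k‖ ^ 2 : ℝ) : ℂ)⁻¹ • (⟪ψ k, x⟫_ℂ • ψ k))
    (v w : H →L[ℂ] H)
    (hv : IsSelfAdjoint v) (hvpos : ∀ x : H, 0 ≤ (⟪x, v x⟫_ℂ).re)
    (hw : IsSelfAdjoint w) (hwv : w ∘L w = v)
    (hwne : ∀ k, w (ψ k) ≠ 0)
    (hworth : ∀ j k, j ≠ k → ⟪w (ψ j), w (ψ k)⟫_ℂ = 0) :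
    ∀ μ : ℂ, μ ≠ 0 →
      ((∃ x : H, x ≠ 0 ∧ w (P (w x)) = μ • x) ↔
        ∃ k, μ = ((‖w (ψ k)‖ ^ 2 / ‖ψ k‖ ^ 2 : ℝ) : ℂ)) :=
  radial_eigenvalues_of_vPv_general ψ P hP w hw hwne hworth
end

section
/- Let H be a Hilbert space, G a one-dimensional subspace spanned by a unit vector φ̃, and K a bounded self-adjoint operator on H with ⟨φ̃, Kφ̃⟩ =: κ > 0. Suppose z : (0, ε₀) × (Λ, 0) → ℝ is continuous in λ and satisfies |z(ε,λ) - (1 + ε log|λ| · κ)| ≤ C ε whenever C₁ ≤ -ε log|λ| ≤ C₂, where κ⁻¹ ∈ (C₁ + δ, C₂ - δ). Then for small ε there exists λ(ε) in the window with z(ε, λ(ε)) = 0, and λ(ε) = -exp(-κ⁻¹ ε⁻¹ (1 + O(ε))) as ε → 0⁺. -/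
/-!
In the window coordinate `t = -ε log|λ|`, i.e. `λ = -exp(-t/ε)`, the function `z(ε, ·)` is within
`Cε` of the affine function `1 - κt`, which changes sign across `[κ⁻¹ - δ, κ⁻¹ + δ]` by `± δκ`.
Once `Cε < δκ` the intermediate value theorem gives a zero, and at any zero in the window
`|1 - κt| ≤ Cε`, which is the claimed asymptotics with `r = κt - 1`.
-/

open Set Filter Topology Real
open scoped InnerProductSpace

lemma lt_neg_exp_neg_div {Λ ε t : ℝ} (hΛ : Λ < 0) (hε : 0 < ε) (ht : ε * -log (-Λ) < t) :
    Λ < -exp (-(t / ε)) := by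
  have : -(t / ε) < log (-Λ) := by
    rw [neg_lt, lt_div_iff₀ hε]
    linarith
  linarith [(lt_log_iff_exp_lt (neg_pos.mpr hΛ)).1 this]

lemma neg_mul_log_abs_neg_exp_neg_div {ε : ℝ} (hε : ε ≠ 0) (t : ℝ) :
    -(ε * log |-exp (-(t / ε))|) = t := by
  rw [abs_neg, abs_of_pos (exp_pos _), log_exp]
  field_simp

lemma exists_zero_of_abs_sub_affine_le {f : ℝ → ℝ} {κ δ η : ℝ} (hκ : 0 < κ) (hδ : 0 ≤ δ)
    (hη : η < δ * κ) (hf : ContinuousOn f (Icc (κ⁻¹ - δ) (κ⁻¹ + δ)))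
    (happrox : ∀ t ∈ Icc (κ⁻¹ - δ) (κ⁻¹ + δ), |f t - (1 - κ * t)| ≤ η) :
    ∃ t ∈ Icc (κ⁻¹ - δ) (κ⁻¹ + δ), f t = 0 := by
  have hle : κ⁻¹ - δ ≤ κ⁻¹ + δ := by linarith
  have hleft := abs_le.1 (happrox _ ⟨le_rfl, hle⟩)
  have hright := abs_le.1 (happrox _ ⟨hle, le_rfl⟩)
  rw [show 1 - κ * (κ⁻¹ - δ) = δ * κ by field_simp; ring] at hleft
  rw [show 1 - κ * (κ⁻¹ + δ) = -(δ * κ) by field_simp; ring] at hright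
  have hpos : 0 < f (κ⁻¹ - δ) := by linarith
  have hneg : f (κ⁻¹ + δ) < 0 := by linarith
  exact intermediate_value_Icc' hle hf ⟨hneg.le, hpos.le⟩

theorem exists_zero_in_log_window {f : ℝ → ℝ} {ε κ Λ η C₁ C₂ δ : ℝ} (hε : 0 < ε)
    (hκ : 0 < κ) (hδ : 0 ≤ δ) (hΛ : Λ < 0) (hΛε : ε * -log (-Λ) < C₁)
    (hwin₁ : C₁ + δ ≤ κ⁻¹) (hwin₂ : κ⁻¹ ≤ C₂ - δ) (hη : η < δ * κ)
    (hf : ContinuousOn f (Ioo Λ 0))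
    (happrox : ∀ l ∈ Ioo Λ (0 : ℝ), C₁ ≤ -(ε * log |l|) → -(ε * log |l|) ≤ C₂ →
      |f l - (1 + ε * log |l| * κ)| ≤ η) :
    ∃ l ∈ Ioo Λ (0 : ℝ), C₁ ≤ -(ε * log |l|) ∧ -(ε * log |l|) ≤ C₂ ∧ f l = 0 := by
  set p : ℝ → ℝ := fun t ↦ -exp (-(t / ε))
  have hcoord (t : ℝ) : -(ε * log |p t|) = t := neg_mul_log_abs_neg_exp_neg_div hε.ne' t
  have hwin (t : ℝ) (ht : t ∈ Icc (κ⁻¹ - δ) (κ⁻¹ + δ)) :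
      C₁ ≤ -(ε * log |p t|) ∧ -(ε * log |p t|) ≤ C₂ := by
    rw [hcoord]
    exact ⟨by linarith [ht.1], by linarith [ht.2]⟩
  have hmaps : MapsTo p (Icc (κ⁻¹ - δ) (κ⁻¹ + δ)) (Ioo Λ 0) := fun t ht ↦
    ⟨lt_neg_exp_neg_div hΛ hε (hΛε.trans_le ((hwin t ht).1.trans_eq (hcoord t))),
      neg_lt_zero.2 (exp_pos _)⟩
  obtain ⟨t, ht, hzero⟩ := exists_zero_of_abs_sub_affine_le (f := f ∘ p) hκ hδ hη
    (hf.comp (by fun_prop) hmaps) fun t ht ↦ by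
      have h := happrox (p t) (hmaps ht) (hwin t ht).1 (hwin t ht).2
      rwa [show 1 + ε * log |p t| * κ = 1 - κ * t by linear_combination (-κ) * hcoord t] at h
  exact ⟨p t, hmaps ht, (hwin t ht).1, (hwin t ht).2, hzero⟩

lemma eq_neg_exp_of_neg {l ε κ : ℝ} (hl : l < 0) (hε : ε ≠ 0) (hκ : κ ≠ 0) :
    l = -exp (-(κ⁻¹ * ε⁻¹ * (1 + -(1 + ε * log |l| * κ)))) := by
  have : -(κ⁻¹ * ε⁻¹ * (1 + -(1 + ε * log |l| * κ))) = log |l| := by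
    field_simp
    ring
  rw [this, exp_log (abs_pos.2 hl.ne), abs_of_neg hl, neg_neg]

theorem exponential_window_zero_general
    (κ : ℝ) (hκpos : 0 < κ)
    (z : ℝ → ℝ → ℝ) (ε₀ Λ C C₁ C₂ δ : ℝ)
    (hε₀ : 0 < ε₀) (hΛ : Λ < 0) (hC : 0 < C) (hδ : 0 < δ) (hC₁ : 0 < C₁)
    (hwin₁ : C₁ + δ < κ⁻¹) (hwin₂ : κ⁻¹ < C₂ - δ)
    (hcont : ∀ ε ∈ Ioo (0 : ℝ) ε₀, ContinuousOn (z ε) (Ioo Λ 0))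
    (happrox : ∀ ε ∈ Ioo (0 : ℝ) ε₀, ∀ l ∈ Ioo Λ (0 : ℝ),
      C₁ ≤ -(ε * Real.log (abs l)) → -(ε * Real.log (abs l)) ≤ C₂ →
      abs (z ε l - (1 + ε * Real.log (abs l) * κ)) ≤ C * ε) :
    ∃ ε₁ : ℝ, 0 < ε₁ ∧ ε₁ ≤ ε₀ ∧ ∃ C' : ℝ, 0 < C' ∧
      ∀ ε ∈ Ioo (0 : ℝ) ε₁,
        (∃ l ∈ Ioo Λ (0 : ℝ), C₁ ≤ -(ε * Real.log (abs l)) ∧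
          -(ε * Real.log (abs l)) ≤ C₂ ∧ z ε l = 0) ∧
        ∀ l ∈ Ioo Λ (0 : ℝ), C₁ ≤ -(ε * Real.log (abs l)) →
          -(ε * Real.log (abs l)) ≤ C₂ → z ε l = 0 →
          ∃ r : ℝ, |r| ≤ C' * ε ∧
            l = -Real.exp (-(κ⁻¹ * ε⁻¹ * (1 + r))) := by
  have hsmall : ∀ᶠ ε in 𝓝 (0 : ℝ), C * ε < δ * κ ∧ ε * -log (-Λ) < C₁ := by
    refine (Tendsto.eventually_lt_const (by positivity) ?_).and
      (Tendsto.eventually_lt_const hC₁ ?_) <;>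
    exact Continuous.tendsto' (by fun_prop) _ _ (by simp)
  obtain ⟨ρ, hρ, hball⟩ := Metric.eventually_nhds_iff.1 hsmall
  refine ⟨min ε₀ ρ, lt_min hε₀ hρ, min_le_left _ _, C, hC, fun ε ⟨hε, hεε₁⟩ ↦ ?_⟩
  have hεε₀ : ε ∈ Ioo 0 ε₀ := ⟨hε, hεε₁.trans_le (min_le_left _ _)⟩
  obtain ⟨hCε, hΛε⟩ := hball <| by
    rw [dist_zero_right, norm_of_nonneg hε.le]
    exact hεε₁.trans_le (min_le_right _ _)
  refine ⟨exists_zero_in_log_window hε hκpos hδ.le hΛ hΛε hwin₁.le hwin₂.le hCε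
    (hcont ε hεε₀) (happrox ε hεε₀), fun l hl h₁ h₂ hzero ↦ ?_⟩
  exact ⟨_, by simpa [hzero] using happrox ε hεε₀ l hl h₁ h₂,
    eq_neg_exp_of_neg hl.2 hε.ne' hκpos.ne'⟩

/-- Step 7 of the integer-flux proof: `z(ε,λ)`, the scalar Schur complement on
the one-dimensional space `G = span{φ̃}`, approximates `1 + ε log|λ|·κ` with
`κ = ⟨φ̃, Kφ̃⟩ > 0` in the window `C₁ ≤ -ε log|λ| ≤ C₂`,
`κ⁻¹ ∈ (C₁+δ, C₂-δ)`. Then for small `ε` a zero `λ(ε)` exists in the window,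
and every such zero satisfies `λ(ε) = -exp(-κ⁻¹ε⁻¹(1 + O(ε)))`. -/
theorem exponential_window_zero
    {H : Type*} [NormedAddCommGroup H] [InnerProductSpace ℂ H] [CompleteSpace H]
    (G : Submodule ℂ H) (φ : H) (hφ : ‖φ‖ = 1) (hG : G = Submodule.span ℂ {φ})
    (K : H →L[ℂ] H) (hK : IsSelfAdjoint K)
    (κ : ℝ) (hκ : κ = (⟪φ, K φ⟫_ℂ).re) (hκpos : 0 < κ)
    (z : ℝ → ℝ → ℝ) (ε₀ Λ C C₁ C₂ δ : ℝ)
    (hε₀ : 0 < ε₀) (hΛ : Λ < 0) (hC : 0 < C) (hδ : 0 < δ) (hC₁ : 0 < C₁)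
    (hwin₁ : C₁ + δ < κ⁻¹) (hwin₂ : κ⁻¹ < C₂ - δ)
    (hcont : ∀ ε ∈ Ioo (0 : ℝ) ε₀, ContinuousOn (z ε) (Ioo Λ 0))
    (happrox : ∀ ε ∈ Ioo (0 : ℝ) ε₀, ∀ l ∈ Ioo Λ (0 : ℝ),
      C₁ ≤ -(ε * Real.log (abs l)) → -(ε * Real.log (abs l)) ≤ C₂ →
      abs (z ε l - (1 + ε * Real.log (abs l) * κ)) ≤ C * ε) :
    ∃ ε₁ : ℝ, 0 < ε₁ ∧ ε₁ ≤ ε₀ ∧ ∃ C' : ℝ, 0 < C' ∧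
      ∀ ε ∈ Ioo (0 : ℝ) ε₁,
        (∃ l ∈ Ioo Λ (0 : ℝ), C₁ ≤ -(ε * Real.log (abs l)) ∧
          -(ε * Real.log (abs l)) ≤ C₂ ∧ z ε l = 0) ∧
        ∀ l ∈ Ioo Λ (0 : ℝ), C₁ ≤ -(ε * Real.log (abs l)) →
          -(ε * Real.log (abs l)) ≤ C₂ → z ε l = 0 →
          ∃ r : ℝ, |r| ≤ C' * ε ∧
            l = -Real.exp (-(κ⁻¹ * ε⁻¹ * (1 + r))) :=
  exponential_window_zero_general κ hκpos z ε₀ Λ C C₁ C₂ δ hε₀ hΛ hC hδ hC₁ hwin₁ hwin₂ hcont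
    happrox
end
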